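/- Assume p_A + p_B = 1 and 1/2 < p_A < 1, and let γ ∈ [0,1]. Define π : S → ℝ by π(σ,i) = (p_A−p_B) p_A^{N−i} p_B^{N+i} / (2 (p_A^{2N+1} − p_B^{2N+1})) for σ ∈ {+1,−1} and i ∈ {−N,...,N}. Then π is a stationary probability vector of M: all entries are positive, they sum to 1, and M π = π. In particular π(+1,i) = π(−1,i) for every i. -/

import Mathlib

open Matrix Finset Filter Topology

/-- Threshold index set `{-N, ..., N}`. -/
abbrev Idx (N : ℕ) : Type := {i : ℤ // i ∈ Finset.Icc (-(N : ℤ)) (N : ℤ)}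

/-- State space `{+1, -1} × {-N, ..., N}`; `true` encodes `+1`, `false` encodes `-1`. -/
abbrev St (N : ℕ) : Type := Bool × Idx N

/-- The upward-move probability `q(σ, i)`. -/
noncomputable def qfun (pA pB : ℝ) (ℓ : ℤ) (σ : Bool) (i : ℤ) : ℝ :=
  if σ then (if i ≤ ℓ then 1 - pA else pB) else (if i ≤ -ℓ - 1 then 1 - pA else pB)

/-- The 2×2 signal-flip matrix `Γ` with diagonal `1 - γ` and off-diagonal `γ`. -/
noncomputable def Gam (γ : ℝ) (τ σ : Bool) : ℝ := if τ = σ then 1 - γ else γ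

/-- The transition matrix `M` of the coupled chain `(s_n, θ_n)`:
`M_{(τ,j),(σ,i)} = Γ_{τ,σ} q(σ,i)` if `j = min(i+1, N)`,
`Γ_{τ,σ} (1 - q(σ,i))` if `j = max(i-1, -N)`, `0` otherwise
(coinciding contributions are added). -/
noncomputable def Mmat (N : ℕ) (pA pB γ : ℝ) (ℓ : ℤ) : Matrix (St N) (St N) ℝ :=
  fun tj si =>
    Gam γ tj.1 si.1 *
      ((if (tj.2 : ℤ) = min ((si.2 : ℤ) + 1) (N : ℤ) then qfun pA pB ℓ si.1 si.2 else 0) +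
       (if (tj.2 : ℤ) = max ((si.2 : ℤ) - 1) (-(N : ℤ)) then 1 - qfun pA pB ℓ si.1 si.2 else 0))

/-!
When `p_A + p_B = 1` we have `1 - p_A = p_B`, so `q ≡ p_B` and the threshold `ℓ` disappears:
`M` is the Kronecker product of the doubly stochastic flip matrix `Γ` with the transition
matrix of a walk on `{-N, ..., N}` that steps up with probability `p_B`, down with
probability `p_A`, and stays put when it would leave the interval. The geometric weights
`p_A^{N-i} p_B^{N+i}` satisfy detailed balance for this walk, and `Γ` fixes the uniform vector
on `{+1, -1}`, so their product, normalised by a geometric sum, is stationary.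
-/

noncomputable def geomWeight (N : ℕ) (a b : ℝ) (i : ℤ) : ℝ :=
  a ^ ((N : ℤ) - i) * b ^ ((N : ℤ) + i)

/-- Entry `(j, i)` is the probability of moving from `i` to `j`. -/
noncomputable def reflectedWalk (N : ℕ) (a b : ℝ) (j i : ℤ) : ℝ :=
  (if j = min (i + 1) (N : ℤ) then b else 0) + (if j = max (i - 1) (-(N : ℤ)) then a else 0)

theorem sum_geomWeight_mul_sub (N : ℕ) (a b : ℝ) :
    (∑ i ∈ Icc (-(N : ℤ)) N, geomWeight N a b i) * (a - b) = a ^ (2 * N + 1) - b ^ (2 * N + 1) := by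
  have reindex : ∑ i ∈ Icc (-(N : ℤ)) N, geomWeight N a b i
      = ∑ k ∈ range (2 * N + 1), a ^ k * b ^ (2 * N + 1 - 1 - k) := by
    refine sum_nbij' (fun i => ((N : ℤ) - i).toNat) (fun k => (N : ℤ) - k) ?_ ?_ ?_ ?_ ?_
    all_goals intro i hi; simp only [mem_Icc, mem_range] at hi ⊢
    any_goals omega
    · rw [geomWeight, show (N : ℤ) - i = (((N : ℤ) - i).toNat : ℕ) by omega,
        show (N : ℤ) + i = ((2 * N + 1 - 1 - ((N : ℤ) - i).toNat : ℕ) : ℤ) by omega,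
        zpow_natCast, zpow_natCast, Int.toNat_natCast]
  rw [reindex, geom_sum₂_mul]

section ReflectedWalk

variable {N : ℕ} {a b : ℝ}

theorem geomWeight_pos (ha : 0 < a) (hb : 0 < b) (i : ℤ) : 0 < geomWeight N a b i :=
  mul_pos (zpow_pos ha _) (zpow_pos hb _)

theorem mul_geomWeight_sub_one (ha : a ≠ 0) (hb : b ≠ 0) (j : ℤ) :
    b * geomWeight N a b (j - 1) = a * geomWeight N a b j := by
  rw [geomWeight, geomWeight, show (N : ℤ) - (j - 1) = (N - j) + 1 by ring,
    show (N : ℤ) + (j - 1) = (N + j) - 1 by ring, zpow_add_one₀ ha, zpow_sub_one₀ hb]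
  field_simp

theorem mul_geomWeight_add_one (ha : a ≠ 0) (hb : b ≠ 0) (j : ℤ) :
    a * geomWeight N a b (j + 1) = b * geomWeight N a b j := by
  have h := mul_geomWeight_sub_one (N := N) ha hb (j + 1)
  rwa [add_sub_cancel_right, eq_comm] at h

theorem reflectedWalk_eq {j i : ℤ} (hj : j ∈ Icc (-(N : ℤ)) N) (hi : i ∈ Icc (-(N : ℤ)) N) :
    reflectedWalk N a b j i
      = (if i = j - 1 then b else 0) + (if i = j + 1 then a else 0)
        + (if i = j then (if j = N then b else 0) + (if j = -(N : ℤ) then a else 0) else 0) := by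
  rw [mem_Icc] at hj hi
  unfold reflectedWalk
  split_ifs <;> first | (exfalso; omega) | ring

theorem sum_reflectedWalk_mul_geomWeight (hab : a + b = 1) (ha : a ≠ 0) (hb : b ≠ 0) {j : ℤ}
    (hj : j ∈ Icc (-(N : ℤ)) N) :
    ∑ i ∈ Icc (-(N : ℤ)) N, reflectedWalk N a b j i * geomWeight N a b i = geomWeight N a b j := by
  have hj' := mem_Icc.mp hj
  rw [sum_congr rfl fun i hi => by rw [reflectedWalk_eq hj hi]]
  simp only [add_mul, ite_mul, zero_mul, sum_add_distrib, sum_ite_eq',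
    mul_geomWeight_sub_one ha hb, mul_geomWeight_add_one ha hb, mem_Icc]
  -- detailed balance turns every incoming flow into a multiple of the weight at `j`
  split_ifs <;> first | (exfalso; omega) | (subst_vars; linear_combination geomWeight N a b _ * hab)

end ReflectedWalk

theorem qfun_eq_of_add_eq_one {pA pB : ℝ} (hsum : pA + pB = 1) (ℓ : ℤ) (σ : Bool) (i : ℤ) :
    qfun pA pB ℓ σ i = pB := by
  have : 1 - pA = pB := by linarith
  unfold qfun
  split_ifs <;> simp [this]

theorem Mmat_apply_of_add_eq_one {N : ℕ} {pA pB : ℝ} (hsum : pA + pB = 1) (γ : ℝ) (ℓ : ℤ)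
    (τ σ : Bool) (j i : Idx N) :
    Mmat N pA pB γ ℓ (τ, j) (σ, i) = Gam γ τ σ * reflectedWalk N pA pB j i := by
  have : 1 - pB = pA := by linarith
  simp only [Mmat, reflectedWalk, qfun_eq_of_add_eq_one hsum, this]

theorem sum_Gam (γ : ℝ) (τ : Bool) : ∑ σ, Gam γ τ σ = 1 := by
  cases τ <;> simp [Gam]

theorem stationary_vector_of_Mmat_general
    (N : ℕ) (x : ℝ)
    (pA pB : ℝ) (hpAhalf : 1 / 2 < pA) (hpB0 : 0 < pB)
    (hsum : pA + pB = 1)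
    (γ : ℝ)
    (π : St N → ℝ)
    (hπ : ∀ (σ : Bool) (i : Idx N),
      π (σ, i) = (pA - pB) * pA ^ ((N : ℤ) - (i : ℤ)) * pB ^ ((N : ℤ) + (i : ℤ))
                   / (2 * (pA ^ (2 * N + 1) - pB ^ (2 * N + 1)))) :
    (∀ s : St N, 0 < π s) ∧ (∑ s : St N, π s = 1) ∧
      (Mmat N pA pB γ ⌊x⌋).mulVec π = π ∧
      (∀ i : Idx N, π (true, i) = π (false, i)) := by
  have hpA0 : 0 < pA := by linarith
  have hsub : 0 < pA - pB := by linarith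
  have hpow : 0 < pA ^ (2 * N + 1) - pB ^ (2 * N + 1) :=
    sub_pos.mpr (pow_lt_pow_left₀ (by linarith) hpB0.le (by omega))
  set c := (pA - pB) / (2 * (pA ^ (2 * N + 1) - pB ^ (2 * N + 1))) with hc
  have hπc : ∀ s : St N, π s = c * geomWeight N pA pB s.2 := by
    rintro ⟨σ, i⟩
    rw [hπ, hc, geomWeight]
    ring
  have sum_Idx (f : ℤ → ℝ) : ∑ i : Idx N, f i = ∑ i ∈ Icc (-(N : ℤ)) N, f i :=
    sum_coe_sort _ f
  refine ⟨fun s => hπc s ▸ mul_pos (by positivity) (geomWeight_pos hpA0 hpB0 _), ?_, ?_,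
    fun i => by rw [hπc, hπc]⟩
  · have hsumW := sum_geomWeight_mul_sub N pA pB
    simp only [Fintype.sum_prod_type, hπc, ← mul_sum, sum_Idx, Fintype.sum_bool, hc]
    field_simp
    linear_combination 2 * hsumW
  · ext ⟨τ, j⟩
    simp only [mulVec, dotProduct, Fintype.sum_prod_type, Mmat_apply_of_add_eq_one hsum, hπc]
    calc ∑ σ, ∑ i : Idx N, Gam γ τ σ * reflectedWalk N pA pB j i * (c * geomWeight N pA pB i)
        = ∑ σ, Gam γ τ σ * c *
            ∑ i ∈ Icc (-(N : ℤ)) N, reflectedWalk N pA pB j i * geomWeight N pA pB i := by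
          refine sum_congr rfl fun σ _ => ?_
          rw [mul_sum, ← sum_Idx]
          exact sum_congr rfl fun i _ => by ring
      _ = c * geomWeight N pA pB j := by
          rw [← sum_mul, ← sum_mul, sum_Gam, one_mul, sum_reflectedWalk_mul_geomWeight hsum
            hpA0.ne' hpB0.ne' j.2]

/-- Theorem: when `p_A + p_B = 1`, the vector
`π(σ,i) = (p_A - p_B) p_A^{N-i} p_B^{N+i} / (2 (p_A^{2N+1} - p_B^{2N+1}))` is a stationary
probability vector of `M`; in particular `π(+1,i) = π(-1,i)` for every `i`. -/
theorem stationary_vector_of_Mmat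
    (N : ℕ) (hN : 0 < N) (x : ℝ) (hx0 : 0 < x) (hxN : x < N)
    (hxint : ∀ k : ℤ, (k : ℝ) ≠ x)
    (pA pB : ℝ) (hpAhalf : 1 / 2 < pA) (hpA1 : pA < 1) (hpB0 : 0 < pB) (hpB1 : pB < 1)
    (hsum : pA + pB = 1)
    (γ : ℝ) (hγ0 : 0 ≤ γ) (hγ1 : γ ≤ 1)
    (π : St N → ℝ)
    (hπ : ∀ (σ : Bool) (i : Idx N),
      π (σ, i) = (pA - pB) * pA ^ ((N : ℤ) - (i : ℤ)) * pB ^ ((N : ℤ) + (i : ℤ))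
                   / (2 * (pA ^ (2 * N + 1) - pB ^ (2 * N + 1)))) :
    (∀ s : St N, 0 < π s) ∧ (∑ s : St N, π s = 1) ∧
      (Mmat N pA pB γ ⌊x⌋).mulVec π = π ∧
      (∀ i : Idx N, π (true, i) = π (false, i)) :=
  stationary_vector_of_Mmat_general N x pA pB hpAhalf hpB0 hsum γ π hπ
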